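/- A signed graph Ω has no two vertex-disjoint unbalanced cycles if and only if its frame matroid equals its lift matroid: F(Ω) = L(Ω). -/

import Mathlib

/-!
In a signed graph every theta contains a balanced cycle: the signs of its three cycles
multiply to `1`, each of the three paths being counted twice. So the frame circuits are the
balanced cycles and the contra-balanced handcuffs, while the lift circuits are the balanced
cycles and the pairs of unbalanced cycles meeting in at most one vertex. Tight handcuffs are
circuits of both; the remaining ones (loose handcuffs in `F(Ω)`, vertex-disjoint unbalanced
pairs in `L(Ω)`) exist only if there are two vertex-disjoint unbalanced cycles. Conversely,
such a pair is a lift circuit but no frame circuit: its union is 2-regular and disconnected,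
whereas every handcuff and theta has a vertex of degree 3 or 4.
-/

/-- A multigraph on vertex type `V` with edge type `E`: each edge has an
unordered pair of endpoints (possibly equal, giving a loop). -/
structure Multigraph (V E : Type) where
  ends : E → Sym2 V

namespace Multigraph

variable {V E : Type} [Fintype V] [DecidableEq V] [Fintype E] [DecidableEq E]

/-- The vertices incident with some edge of `C`. -/
def vertsOf (G : Multigraph V E) (C : Finset E) : Finset V :=
  Finset.univ.filter fun v => ∃ e ∈ C, v ∈ G.ends e

/-- Degree of `v` in the subgraph with edge set `C`; loops count twice. -/
def deg (G : Multigraph V E) (C : Finset E) (v : V) : ℕ :=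
  ∑ e ∈ C, (if G.ends e = Sym2.diag v then 2 else if v ∈ G.ends e then 1 else 0)

/-- Reachability using only edges in `C`. -/
def ReachE (G : Multigraph V E) (C : Finset E) (u w : V) : Prop :=
  Relation.ReflTransGen (fun a b => ∃ e ∈ C, a ∈ G.ends e ∧ b ∈ G.ends e) u w

/-- The subgraph with edge set `C` is connected. -/
def ConnectedOn (G : Multigraph V E) (C : Finset E) : Prop :=
  ∀ u ∈ G.vertsOf C, ∀ w ∈ G.vertsOf C, G.ReachE C u w

/-- `C` is the edge set of a cycle of `G`. -/
def IsCycle (G : Multigraph V E) (C : Finset E) : Prop :=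
  C.Nonempty ∧ G.ConnectedOn C ∧ ∀ v ∈ G.vertsOf C, G.deg C v = 2

/-- `P` is the edge set of a path of `G` from `u` to `w` (of positive length). -/
def IsPath (G : Multigraph V E) (P : Finset E) (u w : V) : Prop :=
  u ≠ w ∧ G.ConnectedOn P ∧ u ∈ G.vertsOf P ∧ w ∈ G.vertsOf P ∧
    G.deg P u = 1 ∧ G.deg P w = 1 ∧
    ∀ v ∈ G.vertsOf P, v ≠ u → v ≠ w → G.deg P v = 2

/-- Theta data: three internally disjoint `u`–`w` paths. -/
def ThetaData (G : Multigraph V E) (P₁ P₂ P₃ : Finset E) (u w : V) : Prop :=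
  G.IsPath P₁ u w ∧ G.IsPath P₂ u w ∧ G.IsPath P₃ u w ∧
    Disjoint P₁ P₂ ∧ Disjoint P₁ P₃ ∧ Disjoint P₂ P₃ ∧
    G.vertsOf P₁ ∩ G.vertsOf P₂ = {u, w} ∧
    G.vertsOf P₁ ∩ G.vertsOf P₃ = {u, w} ∧
    G.vertsOf P₂ ∩ G.vertsOf P₃ = {u, w}

/-- `T` is the edge set of a theta subgraph of `G`. -/
def IsTheta (G : Multigraph V E) (T : Finset E) : Prop :=
  ∃ u w P₁ P₂ P₃, G.ThetaData P₁ P₂ P₃ u w ∧ T = P₁ ∪ P₂ ∪ P₃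

/-- The theta property: no theta subgraph contains exactly two balanced cycles. -/
def ThetaProperty (G : Multigraph V E) (B : Set (Finset E)) : Prop :=
  ∀ u w P₁ P₂ P₃, G.ThetaData P₁ P₂ P₃ u w →
    ¬ ((P₁ ∪ P₂ ∈ B ∧ P₁ ∪ P₃ ∈ B ∧ P₂ ∪ P₃ ∉ B) ∨
       (P₁ ∪ P₂ ∈ B ∧ P₁ ∪ P₃ ∉ B ∧ P₂ ∪ P₃ ∈ B) ∨
       (P₁ ∪ P₂ ∉ B ∧ P₁ ∪ P₃ ∈ B ∧ P₂ ∪ P₃ ∈ B))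

/-- `(G, B)` is a biased graph. -/
def IsBiased (G : Multigraph V E) (B : Set (Finset E)) : Prop :=
  (∀ C ∈ B, G.IsCycle C) ∧ G.ThetaProperty B

/-- A tight handcuff: two edge-disjoint cycles meeting in exactly one vertex. -/
def TightHandcuff (G : Multigraph V E) (C₁ C₂ : Finset E) : Prop :=
  G.IsCycle C₁ ∧ G.IsCycle C₂ ∧ Disjoint C₁ C₂ ∧
    (G.vertsOf C₁ ∩ G.vertsOf C₂).card = 1

/-- A loose handcuff: two vertex-disjoint cycles joined by a path meeting them
only in its endpoints. -/
def LooseHandcuff (G : Multigraph V E) (C₁ C₂ P : Finset E) : Prop :=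
  G.IsCycle C₁ ∧ G.IsCycle C₂ ∧ Disjoint (G.vertsOf C₁) (G.vertsOf C₂) ∧
    Disjoint P C₁ ∧ Disjoint P C₂ ∧
    ∃ u₁ u₂, G.IsPath P u₁ u₂ ∧ u₁ ∈ G.vertsOf C₁ ∧ u₂ ∈ G.vertsOf C₂ ∧
      G.vertsOf P ∩ G.vertsOf C₁ = {u₁} ∧ G.vertsOf P ∩ G.vertsOf C₂ = {u₂}

/-- Circuits of the frame matroid of the biased graph `(G, B)`. -/
def FrameCircuit (G : Multigraph V E) (B : Set (Finset E)) (C : Finset E) : Prop :=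
  (G.IsCycle C ∧ C ∈ B) ∨
  (∃ C₁ C₂, G.TightHandcuff C₁ C₂ ∧ C₁ ∉ B ∧ C₂ ∉ B ∧ C = C₁ ∪ C₂) ∨
  (∃ C₁ C₂ P, G.LooseHandcuff C₁ C₂ P ∧ C₁ ∉ B ∧ C₂ ∉ B ∧ C = C₁ ∪ C₂ ∪ P) ∨
  (G.IsTheta C ∧ ∀ D ⊆ C, G.IsCycle D → D ∉ B)

/-- The balanced cycles of a signed graph `(G, σ)`. -/
def balancedCycles (G : Multigraph V E) (σ : E → ℤˣ) : Set (Finset E) :=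
  {C | G.IsCycle C ∧ ∏ e ∈ C, σ e = 1}

/-- Circuits of the frame matroid of a signed graph. -/
def SFrameCircuit (G : Multigraph V E) (σ : E → ℤˣ) (C : Finset E) : Prop :=
  G.FrameCircuit (G.balancedCycles σ) C

/-- Circuits of the lift matroid of a signed graph. -/
def LiftCircuit (G : Multigraph V E) (σ : E → ℤˣ) (C : Finset E) : Prop :=
  (G.IsCycle C ∧ ∏ e ∈ C, σ e = 1) ∨
  (∃ C₁ C₂, G.IsCycle C₁ ∧ G.IsCycle C₂ ∧
    (∏ e ∈ C₁, σ e) = -1 ∧ (∏ e ∈ C₂, σ e) = -1 ∧ Disjoint C₁ C₂ ∧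
    (G.vertsOf C₁ ∩ G.vertsOf C₂).card ≤ 1 ∧ C = C₁ ∪ C₂)

/-- The sign of edge `e` after switching at the vertex labelling `δ`. -/
def switchSign (G : Multigraph V E) (σ : E → ℤˣ) (δ : V → ℤˣ) (e : E) : ℤˣ :=
  Sym2.lift ⟨fun a b => δ a * δ b, fun a b => mul_comm _ _⟩ (G.ends e) * σ e

/-- Reachability avoiding the vertex set `X`. -/
def ReachAvoiding (G : Multigraph V E) (X : Set V) (u w : V) : Prop :=
  Relation.ReflTransGen
    (fun a b => a ∉ X ∧ b ∉ X ∧ ∃ e, a ∈ G.ends e ∧ b ∈ G.ends e) u w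

/-- `G` is 2-connected. -/
def TwoConnected (G : Multigraph V E) : Prop :=
  3 ≤ Fintype.card V ∧ (∀ u w, G.ReachAvoiding ∅ u w) ∧
    ∀ v u w, u ≠ v → w ≠ v → G.ReachAvoiding {v} u w

/-- `G` is 3-connected. -/
def ThreeConnected (G : Multigraph V E) : Prop :=
  4 ≤ Fintype.card V ∧ (∀ u w, G.ReachAvoiding ∅ u w) ∧
    (∀ v u w, u ≠ v → w ≠ v → G.ReachAvoiding {v} u w) ∧
    ∀ v v' u w, u ∉ ({v, v'} : Set V) → w ∉ ({v, v'} : Set V) →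
      G.ReachAvoiding {v, v'} u w

/-- `v` is a cut-vertex of `G`. -/
def CutVertex (G : Multigraph V E) (v : V) : Prop :=
  ∃ u w, u ≠ v ∧ w ≠ v ∧ G.ReachAvoiding ∅ u w ∧ ¬ G.ReachAvoiding {v} u w

/-- `B` is (the edge set of) a block of `G`: an equivalence class of the
relation "lying on a common cycle". -/
def IsBlock (G : Multigraph V E) (B : Finset E) : Prop :=
  ∃ e, (B : Set E) = {f | f = e ∨ ∃ C, G.IsCycle C ∧ e ∈ C ∧ f ∈ C}

/-- An end-block: a block containing at most one cut-vertex. -/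
def EndBlock (G : Multigraph V E) (B : Finset E) : Prop :=
  G.IsBlock B ∧ ∀ a ∈ G.vertsOf B, ∀ b ∈ G.vertsOf B,
    G.CutVertex a → G.CutVertex b → a = b

end Multigraph

/-- Independence for a set system of circuits. -/
def MIndep {E : Type} (Circuits : Set (Finset E)) (X : Finset E) : Prop :=
  ∀ C ∈ Circuits, ¬ C ⊆ X

/-- The matroid with the given circuits is connected. -/
def MConnected {E : Type} (Circuits : Set (Finset E)) : Prop :=
  ∀ e f : E, e ≠ f → ∃ C ∈ Circuits, e ∈ C ∧ f ∈ C

/-- The matroid with the given circuits is binary (representable over GF(2)). -/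
def MBinary {E : Type} [Fintype E] [DecidableEq E] (Circuits : Set (Finset E)) : Prop :=
  ∃ (n : ℕ) (φ : E → (Fin n → ZMod 2)), ∀ X : Finset E,
    MIndep Circuits X ↔ LinearIndependent (ZMod 2) (fun e : {x // x ∈ X} => φ e.1)

namespace Multigraph

section Reach

variable {V E : Type} {G : Multigraph V E}

lemma ReachE.mono {C D : Finset E} {u w : V} (h : C ⊆ D) (hr : G.ReachE C u w) :
    G.ReachE D u w :=
  Relation.ReflTransGen.mono (fun _ _ ⟨e, he, hu, hw⟩ => ⟨e, h he, hu, hw⟩) _ _ hr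

lemma ReachE.symm {C : Finset E} {u w : V} (hr : G.ReachE C u w) : G.ReachE C w u := by
  induction hr with
  | refl => exact .refl
  | tail _ hstep ih =>
    obtain ⟨e, he, ha, hb⟩ := hstep
    exact ih.head ⟨e, he, hb, ha⟩

end Reach

lemma deg_union {V E : Type} [DecidableEq V] [DecidableEq E] {G : Multigraph V E}
    {C D : Finset E} (h : Disjoint C D) (v : V) :
    G.deg (C ∪ D) v = G.deg C v + G.deg D v :=
  Finset.sum_union h

section Verts

variable {V E : Type} [Fintype V] [DecidableEq V] {G : Multigraph V E}

lemma mem_vertsOf {C : Finset E} {v : V} : v ∈ G.vertsOf C ↔ ∃ e ∈ C, v ∈ G.ends e := by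
  simp [vertsOf]

lemma deg_eq_zero_of_notMem {C : Finset E} {v : V} (h : v ∉ G.vertsOf C) : G.deg C v = 0 := by
  refine Finset.sum_eq_zero fun e he => ?_
  have hv : v ∉ G.ends e := fun hv => h (mem_vertsOf.2 ⟨e, he, hv⟩)
  have hdiag : G.ends e ≠ Sym2.diag v := fun hd => hv (by rw [hd]; exact Sym2.mem_mk_left v v)
  rw [if_neg hdiag, if_neg hv]

lemma disjoint_of_disjoint_vertsOf {C D : Finset E}
    (h : Disjoint (G.vertsOf C) (G.vertsOf D)) : Disjoint C D :=
  Finset.disjoint_left.2 fun e hC hD =>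
    Finset.disjoint_left.1 h (mem_vertsOf.2 ⟨e, hC, Sym2.out_fst_mem _⟩)
      (mem_vertsOf.2 ⟨e, hD, Sym2.out_fst_mem _⟩)

variable [DecidableEq E]

lemma vertsOf_union (C D : Finset E) : G.vertsOf (C ∪ D) = G.vertsOf C ∪ G.vertsOf D := by
  ext v
  simp only [mem_vertsOf, Finset.mem_union, or_and_right, exists_or]

lemma IsCycle.deg_union_eq_two {C₁ C₂ : Finset E} (h₁ : G.IsCycle C₁) (h₂ : G.IsCycle C₂)
    (hd : Disjoint (G.vertsOf C₁) (G.vertsOf C₂)) {v : V} (hv : v ∈ G.vertsOf (C₁ ∪ C₂)) :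
    G.deg (C₁ ∪ C₂) v = 2 := by
  rw [deg_union (disjoint_of_disjoint_vertsOf hd)]
  rw [vertsOf_union, Finset.mem_union] at hv
  rcases hv with hv | hv
  · rw [h₁.2.2 v hv, deg_eq_zero_of_notMem (Finset.disjoint_left.1 hd hv)]
  · rw [h₂.2.2 v hv, deg_eq_zero_of_notMem (Finset.disjoint_right.1 hd hv)]

lemma IsCycle.not_connectedOn_union {C₁ C₂ : Finset E} (h₁ : G.IsCycle C₁)
    (h₂ : G.IsCycle C₂) (hd : Disjoint (G.vertsOf C₁) (G.vertsOf C₂)) :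
    ¬ G.ConnectedOn (C₁ ∪ C₂) := by
  intro hc
  obtain ⟨e₁, he₁⟩ := h₁.1
  obtain ⟨e₂, he₂⟩ := h₂.1
  have ha : (G.ends e₁).out.1 ∈ G.vertsOf C₁ := mem_vertsOf.2 ⟨e₁, he₁, Sym2.out_fst_mem _⟩
  have hb : (G.ends e₂).out.1 ∈ G.vertsOf C₂ := mem_vertsOf.2 ⟨e₂, he₂, Sym2.out_fst_mem _⟩
  have hr := hc _ (by rw [vertsOf_union]; exact Finset.mem_union_left _ ha) _
    (by rw [vertsOf_union]; exact Finset.mem_union_right _ hb)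
  have closed : ∀ x, G.ReachE (C₁ ∪ C₂) (G.ends e₁).out.1 x → x ∈ G.vertsOf C₁ := by
    intro x hx
    induction hx with
    | refl => exact ha
    | tail _ hstep ih =>
      obtain ⟨e, he, hm₁, hm₂⟩ := hstep
      rcases Finset.mem_union.1 he with he | he
      · exact mem_vertsOf.2 ⟨e, he, hm₂⟩
      · exact absurd (mem_vertsOf.2 ⟨e, he, hm₁⟩) (Finset.disjoint_left.1 hd ih)
  exact Finset.disjoint_left.1 hd (closed _ hr) hb

lemma IsPath.isCycle_union {P₁ P₂ : Finset E} {u w : V} (h₁ : G.IsPath P₁ u w)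
    (h₂ : G.IsPath P₂ u w) (hd : Disjoint P₁ P₂)
    (hcap : G.vertsOf P₁ ∩ G.vertsOf P₂ = {u, w}) : G.IsCycle (P₁ ∪ P₂) := by
  obtain ⟨-, hc₁, hu₁, hw₁, hdu₁, hdw₁, hmid₁⟩ := h₁
  obtain ⟨-, hc₂, hu₂, hw₂, hdu₂, hdw₂, hmid₂⟩ := h₂
  refine ⟨?_, ?_, ?_⟩
  · obtain ⟨e, he, -⟩ := mem_vertsOf.1 hu₁
    exact ⟨e, Finset.mem_union_left _ he⟩
  · have reach_u : ∀ x ∈ G.vertsOf (P₁ ∪ P₂), G.ReachE (P₁ ∪ P₂) x u := by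
      intro x hx
      rw [vertsOf_union, Finset.mem_union] at hx
      rcases hx with hx | hx
      · exact (hc₁ x hx u hu₁).mono Finset.subset_union_left
      · exact (hc₂ x hx u hu₂).mono Finset.subset_union_right
    exact fun a ha b hb => (reach_u a ha).trans (reach_u b hb).symm
  · intro v hv
    rw [vertsOf_union, Finset.mem_union] at hv
    rw [deg_union hd]
    by_cases hv₁ : v ∈ G.vertsOf P₁ <;> by_cases hv₂ : v ∈ G.vertsOf P₂
    · have : v ∈ ({u, w} : Finset V) := hcap ▸ Finset.mem_inter.2 ⟨hv₁, hv₂⟩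
      rcases Finset.mem_insert.1 this with rfl | h
      · rw [hdu₁, hdu₂]
      · rw [Finset.mem_singleton.1 h, hdw₁, hdw₂]
    · rw [hmid₁ v hv₁ (fun h => hv₂ (h ▸ hu₂)) (fun h => hv₂ (h ▸ hw₂)),
        deg_eq_zero_of_notMem hv₂]
    · rw [hmid₂ v hv₂ (fun h => hv₁ (h ▸ hu₁)) (fun h => hv₁ (h ▸ hw₁)),
        deg_eq_zero_of_notMem hv₁]
    · tauto

lemma TightHandcuff.exists_deg_eq_four {C₁ C₂ : Finset E} (h : G.TightHandcuff C₁ C₂) :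
    ∃ v ∈ G.vertsOf (C₁ ∪ C₂), G.deg (C₁ ∪ C₂) v = 4 := by
  obtain ⟨h₁, h₂, hd, hcard⟩ := h
  obtain ⟨v, hv⟩ := Finset.card_eq_one.1 hcard
  obtain ⟨hv₁, hv₂⟩ := Finset.mem_inter.1 (hv ▸ Finset.mem_singleton_self v)
  refine ⟨v, by rw [vertsOf_union]; exact Finset.mem_union_left _ hv₁, ?_⟩
  rw [deg_union hd, h₁.2.2 v hv₁, h₂.2.2 v hv₂]

lemma LooseHandcuff.exists_deg_eq_three {C₁ C₂ P : Finset E} (h : G.LooseHandcuff C₁ C₂ P) :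
    ∃ v ∈ G.vertsOf (C₁ ∪ C₂ ∪ P), G.deg (C₁ ∪ C₂ ∪ P) v = 3 := by
  obtain ⟨h₁, -, hd, hP₁, hP₂, u₁, _, hP, hu₁, -⟩ := h
  refine ⟨u₁, by simp only [vertsOf_union, Finset.mem_union]; exact .inl (.inl hu₁), ?_⟩
  rw [deg_union (Finset.disjoint_union_left.2 ⟨hP₁.symm, hP₂.symm⟩),
    deg_union (disjoint_of_disjoint_vertsOf hd), h₁.2.2 u₁ hu₁,
    deg_eq_zero_of_notMem (Finset.disjoint_left.1 hd hu₁), hP.2.2.2.2.1]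

lemma IsTheta.exists_deg_eq_three {T : Finset E} (h : G.IsTheta T) :
    ∃ v ∈ G.vertsOf T, G.deg T v = 3 := by
  obtain ⟨u, _, P₁, P₂, P₃, ⟨hp₁, hp₂, hp₃, h₁₂, h₁₃, h₂₃, -⟩, rfl⟩ := h
  refine ⟨u, by simp only [vertsOf_union, Finset.mem_union]; exact .inl (.inl hp₁.2.2.1), ?_⟩
  rw [deg_union (Finset.disjoint_union_left.2 ⟨h₁₃, h₂₃⟩), deg_union h₁₂,
    hp₁.2.2.2.2.1, hp₂.2.2.2.2.1, hp₃.2.2.2.2.1]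

lemma not_frameCircuit_union {B : Set (Finset E)} {C₁ C₂ : Finset E} (h₁ : G.IsCycle C₁)
    (h₂ : G.IsCycle C₂) (hd : Disjoint (G.vertsOf C₁) (G.vertsOf C₂)) :
    ¬ G.FrameCircuit B (C₁ ∪ C₂) := by
  have regular {v : V} := h₁.deg_union_eq_two h₂ hd (v := v)
  rintro (⟨hC, -⟩ | ⟨D₁, D₂, hD, -, -, hC⟩ | ⟨D₁, D₂, P, hD, -, -, hC⟩ | ⟨hT, -⟩)
  · exact h₁.not_connectedOn_union h₂ hd hC.2.1
  · obtain ⟨v, hv, hdeg⟩ := hD.exists_deg_eq_four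
    rw [← hC, regular (hC ▸ hv)] at hdeg
    omega
  · obtain ⟨v, hv, hdeg⟩ := hD.exists_deg_eq_three
    rw [← hC, regular (hC ▸ hv)] at hdeg
    omega
  · obtain ⟨v, hv, hdeg⟩ := hT.exists_deg_eq_three
    rw [regular hv] at hdeg
    omega

end Verts

section Signed

variable {V E : Type} [Fintype V] [DecidableEq V] {G : Multigraph V E} {σ : E → ℤˣ}

lemma notMem_balancedCycles_iff {C : Finset E} (hC : G.IsCycle C) :
    C ∉ G.balancedCycles σ ↔ ∏ e ∈ C, σ e = -1 := by
  simp [balancedCycles, hC, Int.units_ne_iff_eq_neg]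

variable [DecidableEq E]

variable (σ) in
lemma IsTheta.exists_balancedCycle {T : Finset E} (hT : G.IsTheta T) :
    ∃ D ⊆ T, D ∈ G.balancedCycles σ := by
  obtain ⟨u, w, P₁, P₂, P₃, ⟨hp₁, hp₂, hp₃, h₁₂, h₁₃, h₂₃, hcap₁₂, hcap₁₃, hcap₂₃⟩, rfl⟩ := hT
  have sign_prod : (∏ e ∈ P₁ ∪ P₂, σ e) * (∏ e ∈ P₁ ∪ P₃, σ e) * (∏ e ∈ P₂ ∪ P₃, σ e) = 1 := by
    rw [Finset.prod_union h₁₂, Finset.prod_union h₁₃, Finset.prod_union h₂₃]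
    set a := ∏ e ∈ P₁, σ e
    set b := ∏ e ∈ P₂, σ e
    set c := ∏ e ∈ P₃, σ e
    calc a * b * (a * c) * (b * c) = (a * a) * (b * b) * (c * c) := by ac_rfl
      _ = 1 := by simp only [Int.units_mul_self, mul_one]
  by_contra! hno
  have unbalanced {D : Finset E} (hD : G.IsCycle D) (hsub : D ⊆ P₁ ∪ P₂ ∪ P₃) :
      ∏ e ∈ D, σ e = -1 :=
    (notMem_balancedCycles_iff hD).1 (hno D hsub)
  rw [unbalanced (hp₁.isCycle_union hp₂ h₁₂ hcap₁₂) (by grind),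
    unbalanced (hp₁.isCycle_union hp₃ h₁₃ hcap₁₃) (by grind),
    unbalanced (hp₂.isCycle_union hp₃ h₂₃ hcap₂₃) (by grind)] at sign_prod
  exact absurd sign_prod (by decide)

variable (G σ) in
def HasDisjointUnbalancedCycles : Prop :=
  ∃ C₁ C₂ : Finset E, G.IsCycle C₁ ∧ G.IsCycle C₂ ∧
    (∏ e ∈ C₁, σ e) ≠ 1 ∧ (∏ e ∈ C₂, σ e) ≠ 1 ∧ Disjoint (G.vertsOf C₁) (G.vertsOf C₂)

lemma liftCircuit_of_sFrameCircuit (hn : ¬ G.HasDisjointUnbalancedCycles σ) {C : Finset E}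
    (h : G.SFrameCircuit σ C) : G.LiftCircuit σ C := by
  rcases h with ⟨hC, -, hσ⟩ | ⟨C₁, C₂, ⟨h₁, h₂, hd, hcard⟩, hb₁, hb₂, rfl⟩ |
    ⟨C₁, C₂, P, ⟨h₁, h₂, hd, -⟩, hb₁, hb₂, -⟩ | ⟨hT, hcb⟩
  · exact .inl ⟨hC, hσ⟩
  · exact .inr ⟨C₁, C₂, h₁, h₂, (notMem_balancedCycles_iff h₁).1 hb₁,
      (notMem_balancedCycles_iff h₂).1 hb₂, hd, hcard.le, rfl⟩
  · exact absurd ⟨C₁, C₂, h₁, h₂, fun h => hb₁ ⟨h₁, h⟩, fun h => hb₂ ⟨h₂, h⟩, hd⟩ hn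
  · obtain ⟨D, hD, hbal⟩ := hT.exists_balancedCycle σ
    exact absurd hbal (hcb D hD hbal.1)

lemma sFrameCircuit_of_liftCircuit (hn : ¬ G.HasDisjointUnbalancedCycles σ) {C : Finset E}
    (h : G.LiftCircuit σ C) : G.SFrameCircuit σ C := by
  rcases h with ⟨hC, hσ⟩ | ⟨C₁, C₂, h₁, h₂, hσ₁, hσ₂, hd, hcard, rfl⟩
  · exact .inl ⟨hC, hC, hσ⟩
  have hmeet : (G.vertsOf C₁ ∩ G.vertsOf C₂).Nonempty := by
    refine Finset.nonempty_iff_ne_empty.2 fun hempty => hn ⟨C₁, C₂, h₁, h₂, ?_, ?_,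
      Finset.disjoint_iff_inter_eq_empty.2 hempty⟩ <;> simp [hσ₁, hσ₂]
  exact .inr (.inl ⟨C₁, C₂, ⟨h₁, h₂, hd, le_antisymm hcard hmeet.card_pos⟩,
    (notMem_balancedCycles_iff h₁).2 hσ₁, (notMem_balancedCycles_iff h₂).2 hσ₂, rfl⟩)

lemma HasDisjointUnbalancedCycles.exists_liftCircuit_not_sFrameCircuit
    (h : G.HasDisjointUnbalancedCycles σ) : ∃ C, G.LiftCircuit σ C ∧ ¬ G.SFrameCircuit σ C := by
  obtain ⟨C₁, C₂, h₁, h₂, hσ₁, hσ₂, hd⟩ := h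
  refine ⟨C₁ ∪ C₂, .inr ⟨C₁, C₂, h₁, h₂, Int.units_ne_iff_eq_neg.1 hσ₁,
    Int.units_ne_iff_eq_neg.1 hσ₂, disjoint_of_disjoint_vertsOf hd, ?_, rfl⟩,
    not_frameCircuit_union h₁ h₂ hd⟩
  simp [Finset.disjoint_iff_inter_eq_empty.1 hd]

end Signed

end Multigraph

variable {V E : Type} [Fintype V] [DecidableEq V] [Fintype E] [DecidableEq E]

/-- A signed graph has no two vertex-disjoint unbalanced cycles
iff its frame matroid equals its lift matroid. -/
theorem frame_eq_lift_iff (Γ : Multigraph V E) (σ : E → ℤˣ) :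
    (¬ ∃ C₁ C₂ : Finset E, Γ.IsCycle C₁ ∧ Γ.IsCycle C₂ ∧
        (∏ e ∈ C₁, σ e) ≠ 1 ∧ (∏ e ∈ C₂, σ e) ≠ 1 ∧
        Disjoint (Γ.vertsOf C₁) (Γ.vertsOf C₂)) ↔
      (∀ C : Finset E, Γ.SFrameCircuit σ C ↔ Γ.LiftCircuit σ C) := by
  refine ⟨fun hn C => ⟨Multigraph.liftCircuit_of_sFrameCircuit hn,
    Multigraph.sFrameCircuit_of_liftCircuit hn⟩, fun h hdu => ?_⟩
  obtain ⟨C, hlift, hframe⟩ :=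
    Multigraph.HasDisjointUnbalancedCycles.exists_liftCircuit_not_sFrameCircuit hdu
  exact hframe ((h C).2 hlift)
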